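/- Under the strong overlap condition (existence of λ ∈ (ℝ₊*)^q with ∑λ_i = 1 and 𝙸^T λ = N̄¹), the limit imbalanced equations 𝙸^T(n̄⁰ e^{𝙸β̃} / ∑_i n̄⁰_i e^{(𝙸β̃)_i}) = N̄¹ have a unique solution β̃ ∈ ℝ^p; it is the unique maximizer of β̃ ↦ N̄¹·β̃ − log(∑_i n̄⁰_i e^{(𝙸β̃)_i}). -/

import Mathlib

/-! The map `β ↦ N ⬝ β - log ∑ᵢ wᵢ exp ((A β)ᵢ)` has gradient `N - Aᵀ softmax (A β)`, so the
equations say that `β` is a critical point. Jensen's inequality for `exp`, weighted by the softmax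
at `β`, turns a critical point into a strict global maximizer, because the intercept column forces
`A γ - A β` to be non-constant when `γ ≠ β`; hence uniqueness. For existence, write `N = Aᵀ λ` with
`λ > 0`: the objective is at most `C - (min λ) (max A β - min A β)`, and the spread of `A β` is a
norm of `β`, so the objective tends to `-∞` at infinity and attains its maximum. -/

open Filter Finset Matrix

section LogSumExp

variable {ι : Type*} [Fintype ι]

noncomputable def logSumExp (w x : ι → ℝ) : ℝ := Real.log (∑ i, w i * Real.exp (x i))

noncomputable def softmax (w x : ι → ℝ) (i : ι) : ℝ :=
  w i * Real.exp (x i) / ∑ j, w j * Real.exp (x j)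

variable {w : ι → ℝ}

theorem sum_mul_exp_pos [Nonempty ι] (hw : ∀ i, 0 < w i) (x : ι → ℝ) :
    0 < ∑ i, w i * Real.exp (x i) :=
  sum_pos (fun i _ => mul_pos (hw i) (Real.exp_pos _)) univ_nonempty

theorem softmax_pos (hw : ∀ i, 0 < w i) (x : ι → ℝ) (i : ι) : 0 < softmax w x i :=
  have : Nonempty ι := ⟨i⟩
  div_pos (mul_pos (hw i) (Real.exp_pos _)) (sum_mul_exp_pos hw x)

theorem sum_softmax [Nonempty ι] (hw : ∀ i, 0 < w i) (x : ι → ℝ) : ∑ i, softmax w x i = 1 := by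
  simp only [softmax, ← sum_div, div_self (sum_mul_exp_pos hw x).ne']

theorem transpose_mulVec_softmax_eq_iff {κ : Type*} (A : Matrix ι κ ℝ) (x : ι → ℝ) (N : κ → ℝ) :
    Aᵀ *ᵥ softmax w x = N ↔
      ∀ j, (∑ i, A i j * (w i * Real.exp (x i))) / ∑ i, w i * Real.exp (x i) = N j := by
  simp only [funext_iff, mulVec, dotProduct, transpose_apply, softmax, sum_div, mul_div_assoc]

theorem log_add_le_logSumExp (hw : ∀ i, 0 < w i) (x : ι → ℝ) (i : ι) :
    Real.log (w i) + x i ≤ logSumExp w x := by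
  have hi : 0 < w i * Real.exp (x i) := mul_pos (hw i) (Real.exp_pos _)
  rw [← Real.log_exp (x i), ← Real.log_mul (hw i).ne' (Real.exp_pos _).ne', logSumExp]
  exact Real.log_le_log hi <| single_le_sum (fun j _ => (mul_pos (hw j) (Real.exp_pos _)).le)
    (mem_univ i)

theorem softmax_dotProduct_sub_lt_logSumExp_sub (hw : ∀ i, 0 < w i) {x y : ι → ℝ}
    (hxy : ∃ i j, y i - x i ≠ y j - x j) :
    softmax w x ⬝ᵥ (y - x) < logSumExp w y - logSumExp w x := by
  obtain ⟨i, j, hij⟩ := hxy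
  have : Nonempty ι := ⟨i⟩
  have hjensen := strictConvexOn_exp.map_sum_lt (fun k _ => softmax_pos hw x k)
    (sum_softmax hw x) (fun k _ => Set.mem_univ (y k - x k)) ⟨i, mem_univ _, j, mem_univ _, hij⟩
  have hratio : ∑ k, softmax w x k • Real.exp (y k - x k) =
      (∑ k, w k * Real.exp (y k)) / ∑ k, w k * Real.exp (x k) := by
    simp only [softmax, smul_eq_mul, sum_div, Real.exp_sub]
    refine sum_congr rfl fun k _ => ?_
    field_simp
  rw [hratio, ← Real.lt_log_iff_exp_lt (div_pos (sum_mul_exp_pos hw y) (sum_mul_exp_pos hw x)),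
    Real.log_div (sum_mul_exp_pos hw y).ne' (sum_mul_exp_pos hw x).ne'] at hjensen
  simpa only [dotProduct, Pi.sub_apply, smul_eq_mul, logSumExp] using hjensen

theorem hasDerivAt_logSumExp_add_smul [Nonempty ι] (hw : ∀ i, 0 < w i) (x v : ι → ℝ) :
    HasDerivAt (fun t : ℝ => logSumExp w (x + t • v)) (softmax w x ⬝ᵥ v) 0 := by
  have hsum : HasDerivAt (fun t : ℝ => ∑ i, w i * Real.exp (x i + t * v i))
      (∑ i, w i * (Real.exp (x i) * v i)) 0 := by
    refine HasDerivAt.fun_sum fun i _ => HasDerivAt.const_mul _ ?_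
    simpa using (((hasDerivAt_id (0 : ℝ)).mul_const (v i)).const_add (x i)).exp
  convert hsum.log (by simpa using (sum_mul_exp_pos hw x).ne') using 1
  · simp [logSumExp]
  · simp only [dotProduct, softmax, zero_mul, add_zero, sum_div]
    exact sum_congr rfl fun i _ => by ring

theorem add_mul_sub_le_logSumExp_sub_dotProduct (hw : ∀ i, 0 < w i) {lam : ι → ℝ} {c m : ℝ}
    (hm : 0 ≤ m) (hmlam : ∀ i, m ≤ lam i) (hlam : ∑ i, lam i = 1) (hc : ∀ i, c ≤ Real.log (w i))
    (x : ι → ℝ) (k k' : ι) :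
    c + m * (x k' - x k) ≤ logSumExp w x - lam ⬝ᵥ x := by
  have : Nonempty ι := ⟨k⟩
  obtain ⟨i, hi⟩ := Finite.exists_max x
  have hgap : m * (x k' - x k) ≤ ∑ j, lam j * (x i - x j) := calc
    m * (x k' - x k) ≤ m * (x i - x k) := by gcongr; exact hi k'
    _ ≤ lam k * (x i - x k) := mul_le_mul_of_nonneg_right (hmlam k) (by linarith [hi k])
    _ ≤ ∑ j, lam j * (x i - x j) := single_le_sum (f := fun j => lam j * (x i - x j))
      (fun j _ => mul_nonneg (hm.trans (hmlam j)) (by linarith [hi j])) (mem_univ k)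
  have hsplit : ∑ j, lam j * (x i - x j) = x i - lam ⬝ᵥ x := by
    simp only [mul_sub, sum_sub_distrib, ← sum_mul, hlam, one_mul, dotProduct]
  linarith [log_add_le_logSumExp hw x i, hc i]

theorem continuous_logSumExp [Nonempty ι] (hw : ∀ i, 0 < w i) : Continuous (logSumExp w) :=
  (continuous_finsetSum _ fun i _ => continuous_const.mul (continuous_apply i).rexp).log
    fun x => (sum_mul_exp_pos hw x).ne'

end LogSumExp

section Design

variable {ι κ : Type*} [Fintype ι] [Fintype κ] {A : Matrix ι κ ℝ} {w : ι → ℝ} {N : κ → ℝ}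

theorem exists_pos_mul_norm_le_of_mulVec_sub_le [Nonempty ι]
    (hA : ∀ β, (∀ k k', (A *ᵥ β) k = (A *ᵥ β) k') → β = 0) :
    ∃ c > 0, ∀ β r, (∀ k k', (A *ᵥ β) k' - (A *ᵥ β) k ≤ r) → c * ‖β‖ ≤ r := by
  -- `‖D β‖` is the spread of `A β`
  let D : (κ → ℝ) →ₗ[ℝ] (ι × ι → ℝ) :=
    LinearMap.pi (R := ℝ) fun kk =>
      (LinearMap.proj (R := ℝ) (φ := fun _ : ι => ℝ) kk.2 - LinearMap.proj kk.1) ∘ₗ A.mulVecLin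
  have hD : Function.Injective D := by
    refine (injective_iff_map_eq_zero D).2 fun β hβ => hA β fun k k' => ?_
    exact sub_eq_zero.1 (congrFun hβ (k', k))
  obtain ⟨K, -, hK⟩ := D.injective_iff_antilipschitz.1 hD
  obtain ⟨c, hc, hcD⟩ := antilipschitzWith_iff_exists_mul_le_norm.1 ⟨K, hK⟩
  refine ⟨c, hc, fun β r hr => (hcD β).trans ?_⟩
  obtain ⟨k⟩ := ‹Nonempty ι›
  refine (pi_norm_le_iff_of_nonneg (by simpa using hr k k)).2 fun kk => ?_
  exact Real.norm_eq_abs _ ▸ abs_sub_le_iff.2 ⟨hr _ _, hr _ _⟩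

theorem tendsto_dotProduct_sub_logSumExp_cocompact [Nonempty ι]
    (hA : ∀ β, (∀ k k', (A *ᵥ β) k = (A *ᵥ β) k') → β = 0) (hw : ∀ i, 0 < w i) {lam : ι → ℝ}
    (hlam : ∀ i, 0 < lam i) (hlamsum : ∑ i, lam i = 1) (hN : Aᵀ *ᵥ lam = N) :
    Tendsto (fun β => N ⬝ᵥ β - logSumExp w (A *ᵥ β)) (cocompact _) atBot := by
  obtain ⟨i₀, hi₀⟩ := Finite.exists_min lam
  obtain ⟨i₁, hi₁⟩ := Finite.exists_min fun i => Real.log (w i)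
  obtain ⟨c, hc, hnorm⟩ := exists_pos_mul_norm_le_of_mulVec_sub_le hA
  have hbound : ∀ β, N ⬝ᵥ β - logSumExp w (A *ᵥ β) ≤ -Real.log (w i₁) + -(lam i₀ * c * ‖β‖) := by
    intro β
    have hdiff := add_mul_sub_le_logSumExp_sub_dotProduct hw (hlam i₀).le hi₀ hlamsum hi₁ (A *ᵥ β)
    have := hnorm β _ fun k k' => (le_div_iff₀' (hlam i₀)).2 (le_sub_iff_add_le'.2 (hdiff k k'))
    rw [le_div_iff₀' (hlam i₀), ← mul_assoc] at this
    have hdual : N ⬝ᵥ β = lam ⬝ᵥ (A *ᵥ β) := by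
      rw [← hN, mulVec_transpose, ← dotProduct_mulVec]
    linarith
  refine tendsto_atBot_mono hbound (tendsto_atBot_add_const_left _ _ ?_)
  exact tendsto_neg_atTop_atBot.comp
    (tendsto_norm_cocompact_atTop.const_mul_atTop (mul_pos (hlam i₀) hc))

theorem transpose_mulVec_softmax_eq_of_forall_le [Nonempty ι] (hw : ∀ i, 0 < w i) {β : κ → ℝ}
    (hmax : ∀ γ, N ⬝ᵥ γ - logSumExp w (A *ᵥ γ) ≤ N ⬝ᵥ β - logSumExp w (A *ᵥ β)) :
    Aᵀ *ᵥ softmax w (A *ᵥ β) = N := by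
  classical
  funext j
  let v : κ → ℝ := Pi.single j 1
  have hderiv : HasDerivAt (fun t : ℝ => N ⬝ᵥ (β + t • v) - logSumExp w (A *ᵥ (β + t • v)))
      (N ⬝ᵥ v - softmax w (A *ᵥ β) ⬝ᵥ (A *ᵥ v)) 0 := by
    simp only [mulVec_add, mulVec_smul, dotProduct_add, dotProduct_smul, smul_eq_mul]
    exact (((hasDerivAt_id (0 : ℝ)).mul_const _).const_add _).sub
      (hasDerivAt_logSumExp_add_smul hw _ _) |>.congr_deriv (by simp)
  have hlocal : IsLocalMax (fun t : ℝ => N ⬝ᵥ (β + t • v) - logSumExp w (A *ᵥ (β + t • v))) 0 :=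
    Eventually.of_forall fun t => by simpa using hmax (β + t • v)
  have := hlocal.hasDerivAt_eq_zero hderiv
  rw [dotProduct_single_one, mulVec_single_one, dotProduct_comm] at this
  exact (sub_eq_zero.1 this).symm

theorem dotProduct_sub_logSumExp_lt_of_transpose_mulVec_softmax_eq
    (hA : ∀ β, (∀ k k', (A *ᵥ β) k = (A *ᵥ β) k') → β = 0) (hw : ∀ i, 0 < w i) {β γ : κ → ℝ}
    (hβ : Aᵀ *ᵥ softmax w (A *ᵥ β) = N) (hγ : γ ≠ β) :
    N ⬝ᵥ γ - logSumExp w (A *ᵥ γ) < N ⬝ᵥ β - logSumExp w (A *ᵥ β) := by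
  have hnonconst : ∃ i j, (A *ᵥ γ) i - (A *ᵥ β) i ≠ (A *ᵥ γ) j - (A *ᵥ β) j := by
    by_contra! h
    refine hγ (sub_eq_zero.1 (hA _ fun k k' => ?_))
    simpa only [mulVec_sub, Pi.sub_apply] using h k k'
  have hlin : softmax w (A *ᵥ β) ⬝ᵥ (A *ᵥ γ - A *ᵥ β) = N ⬝ᵥ γ - N ⬝ᵥ β := by
    rw [← mulVec_sub, dotProduct_mulVec, ← mulVec_transpose, hβ, dotProduct_sub]
  linarith [softmax_dotProduct_sub_lt_logSumExp_sub hw hnonconst]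

theorem exists_transpose_mulVec_softmax_eq
    (hA : ∀ β, (∀ k k', (A *ᵥ β) k = (A *ᵥ β) k') → β = 0) (hw : ∀ i, 0 < w i) {lam : ι → ℝ}
    (hlam : ∀ i, 0 < lam i) (hlamsum : ∑ i, lam i = 1) (hN : Aᵀ *ᵥ lam = N) :
    ∃ β, Aᵀ *ᵥ softmax w (A *ᵥ β) = N := by
  have : Nonempty ι := by
    by_contra h
    simp [not_nonempty_iff.1 h] at hlamsum
  have hcont : Continuous fun β => N ⬝ᵥ β - logSumExp w (A *ᵥ β) :=
    (continuous_const.dotProduct continuous_id).sub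
      ((continuous_logSumExp hw).comp (continuous_const.matrix_mulVec continuous_id))
  obtain ⟨β, hβ⟩ := hcont.exists_forall_ge
    (tendsto_dotProduct_sub_logSumExp_cocompact hA hw hlam hlamsum hN)
  exact ⟨β, transpose_mulVec_softmax_eq_of_forall_le hw hβ⟩

end Design

theorem eq_zero_of_forall_mulVec_submatrix_succ_eq {R ι : Type*} [CommRing R] [Fintype ι] {p : ℕ}
    {I : Matrix ι (Fin (p + 1)) R} (hrank : Function.Injective I.mulVec) (hones : ∀ i, I i 0 = 1)
    (d : Fin p → R)
    (hd : ∀ i i', (I.submatrix id Fin.succ *ᵥ d) i = (I.submatrix id Fin.succ *ᵥ d) i') :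
    d = 0 := by
  obtain ⟨c, hc⟩ : ∃ c, ∀ i, (I.submatrix id Fin.succ *ᵥ d) i = c :=
    (isEmpty_or_nonempty ι).elim (fun _ => ⟨0, isEmptyElim⟩) fun ⟨i₀⟩ => ⟨_, fun i => hd i i₀⟩
  have hcons : I *ᵥ Fin.cons (-c) d = I *ᵥ 0 := by
    funext i
    have := hc i
    simp only [mulVec, dotProduct, submatrix_apply, id] at this
    simp [mulVec, dotProduct, Fin.sum_univ_succ, hones, this]
  funext k
  simpa using congrFun (hrank hcons) k.succ

theorem limit_imbalanced_existence_uniqueness_general (p q : ℕ)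
    (I : Matrix (Fin q) (Fin (p + 1)) ℝ)
    (hrank : Function.Injective I.mulVec)
    (hones : ∀ i, I i 0 = 1)
    (n0 : Fin q → ℝ) (hn0 : ∀ i, 0 < n0 i)
    (N1 : Fin p → ℝ)
    (lam : Fin q → ℝ) (hlam : ∀ i, 0 < lam i) (hlamsum : ∑ i, lam i = 1)
    (hlamI : ∀ j : Fin p, ∑ i, I i j.succ * lam i = N1 j) :
    (∃! β : Fin p → ℝ, ∀ j : Fin p,
        (∑ i, I i j.succ * (n0 i * Real.exp (∑ k : Fin p, I i k.succ * β k))) /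
          (∑ i, n0 i * Real.exp (∑ k : Fin p, I i k.succ * β k)) = N1 j) ∧
    (∀ β : Fin p → ℝ,
      (∀ j : Fin p,
        (∑ i, I i j.succ * (n0 i * Real.exp (∑ k : Fin p, I i k.succ * β k))) /
          (∑ i, n0 i * Real.exp (∑ k : Fin p, I i k.succ * β k)) = N1 j) →
      ∀ γ : Fin p → ℝ, γ ≠ β →
        (∑ j, N1 j * γ j) - Real.log (∑ i, n0 i * Real.exp (∑ k : Fin p, I i k.succ * γ k))
          < (∑ j, N1 j * β j)
            - Real.log (∑ i, n0 i * Real.exp (∑ k : Fin p, I i k.succ * β k))) := by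
  -- `A` is the paper's `𝙸`
  set A : Matrix (Fin q) (Fin p) ℝ := I.submatrix id Fin.succ
  have hA := eq_zero_of_forall_mulVec_submatrix_succ_eq hrank hones
  have hmax : ∀ β, Aᵀ *ᵥ softmax n0 (A *ᵥ β) = N1 → ∀ γ, γ ≠ β →
      N1 ⬝ᵥ γ - logSumExp n0 (A *ᵥ γ) < N1 ⬝ᵥ β - logSumExp n0 (A *ᵥ β) :=
    fun β hβ γ hγ => dotProduct_sub_logSumExp_lt_of_transpose_mulVec_softmax_eq hA hn0 hβ hγ
  obtain ⟨β, hβ⟩ := exists_transpose_mulVec_softmax_eq hA hn0 hlam hlamsum (funext hlamI)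
  have hunique : ∃! β, Aᵀ *ᵥ softmax n0 (A *ᵥ β) = N1 :=
    ⟨β, hβ, fun γ hγ => by_contra fun hne => (hmax β hβ γ hne).not_gt (hmax γ hγ β (Ne.symm hne))⟩
  simp only [transpose_mulVec_softmax_eq_iff] at hunique hmax
  exact ⟨hunique, hmax⟩

/-- Under the strong overlap condition, the limit imbalanced equations have a unique
solution `β̃ ∈ ℝ^p`, and this solution is the unique maximizer of
`β̃ ↦ N̄¹·β̃ − log (∑ i, n̄⁰ i e^{(𝙸β̃) i})`. -/
theorem limit_imbalanced_existence_uniqueness (p q : ℕ)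
    (I : Matrix (Fin q) (Fin (p + 1)) ℝ)
    (hrank : Function.Injective I.mulVec)
    (hones : ∀ i, I i 0 = 1)
    (n0 : Fin q → ℝ) (hn0 : ∀ i, 0 < n0 i) (hsum : ∑ i, n0 i = 1)
    (N1 : Fin p → ℝ)
    (lam : Fin q → ℝ) (hlam : ∀ i, 0 < lam i) (hlamsum : ∑ i, lam i = 1)
    (hlamI : ∀ j : Fin p, ∑ i, I i j.succ * lam i = N1 j) :
    (∃! β : Fin p → ℝ, ∀ j : Fin p,
        (∑ i, I i j.succ * (n0 i * Real.exp (∑ k : Fin p, I i k.succ * β k))) /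
          (∑ i, n0 i * Real.exp (∑ k : Fin p, I i k.succ * β k)) = N1 j) ∧
    (∀ β : Fin p → ℝ,
      (∀ j : Fin p,
        (∑ i, I i j.succ * (n0 i * Real.exp (∑ k : Fin p, I i k.succ * β k))) /
          (∑ i, n0 i * Real.exp (∑ k : Fin p, I i k.succ * β k)) = N1 j) →
      ∀ γ : Fin p → ℝ, γ ≠ β →
        (∑ j, N1 j * γ j) - Real.log (∑ i, n0 i * Real.exp (∑ k : Fin p, I i k.succ * γ k))
          < (∑ j, N1 j * β j)
            - Real.log (∑ i, n0 i * Real.exp (∑ k : Fin p, I i k.succ * β k))) :=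
  limit_imbalanced_existence_uniqueness_general p q I hrank hones n0 hn0 N1 lam hlam hlamsum hlamI
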